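/- Let M = (R,T,c) and M' = (R,T,c') be MRTA instances on the same robots and tasks whose cost functions c and c' are both injective on E and differ only in the cost of a single edge e ∈ E. Let (W, a) be the output of the SSI auction on M, with u_k the second-best edge of round k. Then the SSI auction on M' outputs the same winning-edge list and assignment function as the SSI auction on M (and hence Assign, which depends only on this output, returns the same plan) if any of the following holds: (1) e does not appear in W and c'(e) > max_{k ∈ B_e} c(w_k); (2) e = w_K appears in W, |B_e| = 1, and c(u_K) > c'(e) ≥ 0; (3) e = w_K appears in W, |B_e| > 1, and c(u_K) > c'(e) > max_{k ∈ B_e ∖ {K}} c(w_k). -/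

import Mathlib

open Finset

/-- The set of tasks assigned in the bid rounds with (0-based) index `< k`. -/
def auctionAssigned {V : Type*} [DecidableEq V] {n : ℕ} (w : Fin n → V × V) (k : ℕ) :
    Finset V :=
  (Finset.univ.filter fun i : Fin n => (i : ℕ) < k).image fun i => (w i).2

/-- `w` is the output of the SSI auction for the instance `(R, T, c)`. -/
def IsAuction {V : Type*} [DecidableEq V] (R T : Finset V) (c : V → V → ℝ) {n : ℕ}
    (w : Fin n → V × V) : Prop :=
  ∀ k : Fin n,
    (w k).1 ∈ R ∪ auctionAssigned w (k : ℕ) ∧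
    (w k).2 ∈ T \ auctionAssigned w (k : ℕ) ∧
    ∀ s ∈ R ∪ auctionAssigned w (k : ℕ), ∀ t ∈ T \ auctionAssigned w (k : ℕ),
      (s, t) ≠ w k → c (w k).1 (w k).2 < c s t

/-- `c` is injective on the edge set of the complete graph. -/
def InjOnEdges {V : Type*} (c : V → V → ℝ) : Prop :=
  ∀ x y x' y' : V, x ≠ y → x' ≠ y' → c x y = c x' y' →
    (x = x' ∧ y = y') ∨ (x = y' ∧ y = x')

/-- The assignment function of the auction: `a v = k` if `v` is the task assigned
in (1-based) round `k`, and `a v = 0` if `v` is never assigned (e.g. a robot). -/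
def assignFn {V : Type*} [DecidableEq V] {n : ℕ} (w : Fin n → V × V) (v : V) : ℕ :=
  (Finset.univ.filter fun k : Fin n => (w k).2 = v).sup fun k => (k : ℕ) + 1

/-- The set `B_e` of (1-based) bid rounds considering the edge `e = {x,y}`:
`B_e = {k : min(a x, a y) < k ≤ max(a x, a y)}`. -/
def bidRounds {V : Type*} (a : V → ℕ) (x y : V) : Finset ℕ :=
  Finset.Ioc (min (a x) (a y)) (max (a x) (a y))


/-- `p` is the second-best edge of round `K`: it is an edge considered in round `K`,
distinct from the winning edge `w K`, of minimal cost among all such edges. -/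
def IsSecondBest {V : Type*} [DecidableEq V] (c : V → V → ℝ) {n : ℕ}
    (w : Fin n → V × V) (K : Fin n) (p : V × V) : Prop :=
  p.1 ≠ p.2 ∧ p ≠ w K ∧ (p.2, p.1) ≠ w K ∧
  ((K : ℕ) + 1) ∈ bidRounds (assignFn w) p.1 p.2 ∧
  ∀ x y : V, x ≠ y → ((K : ℕ) + 1) ∈ bidRounds (assignFn w) x y →
    (x, y) ≠ w K → (y, x) ≠ w K → c p.1 p.2 ≤ c x y

/-!
Changing the cost of the single edge `e` only affects the comparisons in which `e` takes part,
that is, the rounds in `B_e`. The auction's output survives as long as `e` still loses every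
round of `B_e` it did not win (its new cost stays above the winners of those rounds) and still
wins the round it did win (its new cost stays below the second-best edge of that round, which is
at most the cost of every other candidate). Each of (1)–(3) guarantees both.
-/

theorem bidRounds_comm {V : Type*} (a : V → ℕ) (x y : V) : bidRounds a x y = bidRounds a y x := by
  simp only [bidRounds, min_comm, max_comm]

theorem ne_of_mem_bidRounds {V : Type*} {a : V → ℕ} {m : ℕ} {s t : V}
    (h : m ∈ bidRounds a s t) : s ≠ t := by
  rintro rfl
  simp [bidRounds] at h

theorem mem_auctionAssigned {V : Type*} [DecidableEq V] {n : ℕ} {w : Fin n → V × V} {k : ℕ}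
    {t : V} : t ∈ auctionAssigned w k ↔ ∃ i : Fin n, (i : ℕ) < k ∧ (w i).2 = t := by
  simp [auctionAssigned]

namespace IsAuction

variable {V : Type*} [DecidableEq V] {R T : Finset V} {c : V → V → ℝ}

section

variable {n : ℕ} {w : Fin n → V × V}

theorem snd_injective (hw : IsAuction R T c w) : Function.Injective fun k => (w k).2 := by
  intro i j (h : (w i).2 = (w j).2)
  by_contra hne
  rcases Fin.lt_or_lt_of_ne hne with hlt | hlt
  · exact (mem_sdiff.1 (hw j).2.1).2 (mem_auctionAssigned.2 ⟨i, hlt, h⟩)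
  · exact (mem_sdiff.1 (hw i).2.1).2 (mem_auctionAssigned.2 ⟨j, hlt, h.symm⟩)

theorem assignFn_snd (hw : IsAuction R T c w) (k : Fin n) :
    assignFn w (w k).2 = (k : ℕ) + 1 := by
  have hround : univ.filter (fun j => (w j).2 = (w k).2) = {k} := by
    ext j
    simpa using hw.snd_injective.eq_iff (a := j) (b := k)
  simp [assignFn, hround]

theorem assignFn_eq_zero (hw : IsAuction R T c w) (hdisj : Disjoint R T) {r : V} (hr : r ∈ R) :
    assignFn w r = 0 := by
  have hnone : univ.filter (fun j => (w j).2 = r) = ∅ :=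
    filter_eq_empty_iff.2 fun j _ h =>
      disjoint_left.1 hdisj hr (h ▸ (mem_sdiff.1 (hw j).2.1).1)
  simp [assignFn, hnone]

theorem assignFn_le (hw : IsAuction R T c w) (hdisj : Disjoint R T) {k : ℕ} {s : V}
    (hs : s ∈ R ∪ auctionAssigned w k) : assignFn w s ≤ k := by
  rcases mem_union.1 hs with hs | hs
  · simp [hw.assignFn_eq_zero hdisj hs]
  · obtain ⟨i, hik, rfl⟩ := mem_auctionAssigned.1 hs
    rw [hw.assignFn_snd]
    omega

theorem max_assignFn_of_win (hw : IsAuction R T c w) (hdisj : Disjoint R T) {k : Fin n}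
    {x y : V} (hk : w k = (x, y) ∨ w k = (y, x)) :
    max (assignFn w x) (assignFn w y) = (k : ℕ) + 1 := by
  have hfst := hw.assignFn_le hdisj (hw k).1
  have hsnd := hw.assignFn_snd k
  rcases hk with hk | hk <;> rw [hk] at hfst hsnd <;> dsimp only at hfst hsnd <;> omega

theorem eq_of_win (hw : IsAuction R T c w) (hdisj : Disjoint R T) {k K : Fin n} {x y : V}
    (hk : w k = (x, y) ∨ w k = (y, x)) (hK : w K = (x, y) ∨ w K = (y, x)) : k = K := by
  have := (hw.max_assignFn_of_win hdisj hk).symm.trans (hw.max_assignFn_of_win hdisj hK)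
  exact Fin.ext (by omega)

theorem swap_ne (hw : IsAuction R T c w) (hdisj : Disjoint R T) {k : Fin n} {s t : V}
    (ht : t ∈ T \ auctionAssigned w k) : (t, s) ≠ w k := by
  intro h
  rcases mem_union.1 (h ▸ (hw k).1) with htR | htA
  · exact disjoint_left.1 hdisj htR (mem_sdiff.1 ht).1
  · exact (mem_sdiff.1 ht).2 htA

end

variable {c' : V → V → ℝ} {w u : Fin T.card → V × V} {x y : V}

theorem exists_snd_eq (hw : IsAuction R T c w) {t : V} (ht : t ∈ T) : ∃ k, (w k).2 = t := by
  have hsub : univ.image (fun k => (w k).2) ⊆ T := fun v hv => by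
    obtain ⟨k, -, rfl⟩ := mem_image.1 hv
    exact (mem_sdiff.1 (hw k).2.1).1
  have heq := eq_of_subset_of_card_le hsub (by simp [card_image_of_injective _ hw.snd_injective])
  rw [← heq] at ht
  simpa using ht

theorem lt_assignFn (hw : IsAuction R T c w) {k : ℕ} {t : V}
    (ht : t ∈ T \ auctionAssigned w k) : k < assignFn w t := by
  obtain ⟨j, rfl⟩ := hw.exists_snd_eq (mem_sdiff.1 ht).1
  rw [hw.assignFn_snd]
  by_contra! hjk
  exact (mem_sdiff.1 ht).2 (mem_auctionAssigned.2 ⟨j, by omega, rfl⟩)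

theorem mem_bidRounds (hw : IsAuction R T c w) (hdisj : Disjoint R T) {k : Fin T.card} {s t : V}
    (hs : s ∈ R ∪ auctionAssigned w k) (ht : t ∈ T \ auctionAssigned w k) :
    (k : ℕ) + 1 ∈ bidRounds (assignFn w) s t := by
  have := hw.assignFn_le hdisj hs
  have := hw.lt_assignFn ht
  simp only [bidRounds, mem_Ioc]
  omega

theorem mem_bidRounds_of_win (hw : IsAuction R T c w) (hdisj : Disjoint R T) {k : Fin T.card}
    (hk : w k = (x, y) ∨ w k = (y, x)) :
    (k : ℕ) + 1 ∈ bidRounds (assignFn w) x y := by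
  have hwin := hw.mem_bidRounds hdisj (hw k).1 (hw k).2.1
  rcases hk with hk | hk <;> rw [hk] at hwin
  exacts [hwin, bidRounds_comm (assignFn w) y x ▸ hwin]

theorem of_agree_off_edge (hw : IsAuction R T c w) (hdisj : Disjoint R T)
    (hu : ∀ k, IsSecondBest c w k (u k)) (hsymm' : ∀ p q, c' p q = c' q p)
    (hsame : ∀ p q : V, (p, q) ≠ (x, y) → (p, q) ≠ (y, x) → c' p q = c p q)
    (hlose : ∀ k : Fin T.card, w k ≠ (x, y) → w k ≠ (y, x) →
      (k : ℕ) + 1 ∈ bidRounds (assignFn w) x y → c (w k).1 (w k).2 < c' x y)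
    (hwin : ∀ k : Fin T.card, w k = (x, y) ∨ w k = (y, x) → c' x y < c (u k).1 (u k).2) :
    IsAuction R T c' w := by
  intro k
  refine ⟨(hw k).1, (hw k).2.1, fun s hs t ht hne => ?_⟩
  have hbid := hw.mem_bidRounds hdisj hs ht
  have hswap := hw.swap_ne (s := s) hdisj ht
  by_cases hwk : w k = (x, y) ∨ w k = (y, x)
  · have hc'w : c' (w k).1 (w k).2 = c' x y := by
      rcases hwk with h | h <;> rw [h]
      exact hsymm' y x
    have hst : (s, t) ≠ (x, y) ∧ (s, t) ≠ (y, x) := by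
      rcases hwk with h | h <;> rw [h] at hne hswap <;> grind
    calc c' (w k).1 (w k).2 = c' x y := hc'w
      _ < c (u k).1 (u k).2 := hwin k hwk
      _ ≤ c s t := (hu k).2.2.2.2 s t (ne_of_mem_bidRounds hbid) hbid hne hswap
      _ = c' s t := (hsame s t hst.1 hst.2).symm
  push Not at hwk
  have hc'w : c' (w k).1 (w k).2 = c (w k).1 (w k).2 := hsame _ _ hwk.1 hwk.2
  by_cases hst : (s, t) = (x, y) ∨ (s, t) = (y, x)
  · rcases hst with h | h <;> obtain ⟨rfl, rfl⟩ := Prod.mk.inj h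
    · exact hc'w ▸ hlose k hwk.1 hwk.2 hbid
    · rw [hsymm' s t]
      exact hc'w ▸ hlose k hwk.1 hwk.2 (bidRounds_comm (assignFn w) s t ▸ hbid)
  push Not at hst
  rw [hc'w, hsame s t hst.1 hst.2]
  exact (hw k).2.2 s hs t ht hne

end IsAuction

theorem statement8_general {V : Type*} [DecidableEq V] (R T : Finset V)
    (hdisj : Disjoint R T)
    (c c' : V → V → ℝ)
    (hsymm' : ∀ x y, c' x y = c' y x)
    (w : Fin T.card → V × V) (hw : IsAuction R T c w)
    (u : Fin T.card → V × V) (hu : ∀ k, IsSecondBest c w k (u k))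
    -- `c` and `c'` differ only in the cost of the single edge `e = {x,y}`
    (x y : V)
    (hsame : ∀ p q : V, (p, q) ≠ (x, y) → (p, q) ≠ (y, x) → c' p q = c p q)
    (hcases :
      -- (1) `e` does not appear in `W` and `c'(e) > max_{k ∈ B_e} c(w_k)`
      ((∀ k : Fin T.card, w k ≠ (x, y) ∧ w k ≠ (y, x)) ∧
        (∀ k : Fin T.card, ((k : ℕ) + 1) ∈ bidRounds (assignFn w) x y →
          c (w k).1 (w k).2 < c' x y)) ∨
      -- (2) `e = w K` appears in `W`, `|B_e| = 1`, and `c(u_K) > c'(e) ≥ 0`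
      (∃ K : Fin T.card, (w K = (x, y) ∨ w K = (y, x)) ∧
        (bidRounds (assignFn w) x y).card = 1 ∧
        0 ≤ c' x y ∧ c' x y < c (u K).1 (u K).2) ∨
      -- (3) `e = w K` appears in `W`, `|B_e| > 1`, and
      -- `c(u_K) > c'(e) > max_{k ∈ B_e ∖ {K}} c(w_k)`
      (∃ K : Fin T.card, (w K = (x, y) ∨ w K = (y, x)) ∧
        1 < (bidRounds (assignFn w) x y).card ∧
        c' x y < c (u K).1 (u K).2 ∧
        (∀ k : Fin T.card, ((k : ℕ) + 1) ∈ bidRounds (assignFn w) x y → k ≠ K →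
          c (w k).1 (w k).2 < c' x y))) :
    -- the auction on `c'` outputs the same winning-edge list and assignment function
    -- (hence `Assign`, which depends only on this output, returns the same plan)
    IsAuction R T c' w := by
  refine hw.of_agree_off_edge hdisj hu hsymm' hsame (fun k hkxy hkyx hk => ?_) (fun k hk => ?_)
  · rcases hcases with ⟨-, hlow⟩ | ⟨K, hK, hone, -, -⟩ | ⟨K, hK, -, -, hlow⟩
    · exact hlow k hk
    · -- `e` is considered only in the round it wins
      obtain ⟨m, hm⟩ := card_eq_one.1 hone
      have hK' := hw.mem_bidRounds_of_win hdisj hK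
      rw [hm, mem_singleton] at hk hK'
      obtain rfl : k = K := Fin.ext (by omega)
      tauto
    · exact hlow k hk (by rintro rfl; tauto)
  · rcases hcases with ⟨hnot, -⟩ | ⟨K, hK, -, -, hlt⟩ | ⟨K, hK, -, hlt, -⟩
    · have := hnot k
      tauto
    all_goals
      obtain rfl := hw.eq_of_win hdisj hk hK
      exact hlt

theorem statement8 {V : Type*} [Fintype V] [DecidableEq V] (R T : Finset V)
    (hdisj : Disjoint R T) (hunion : R ∪ T = Finset.univ) (hcard : 3 ≤ Fintype.card V)
    (c c' : V → V → ℝ)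
    (hsymm : ∀ x y, c x y = c y x) (hnonneg : ∀ x y, 0 ≤ c x y) (hinj : InjOnEdges c)
    (hsymm' : ∀ x y, c' x y = c' y x) (hnonneg' : ∀ x y, 0 ≤ c' x y) (hinj' : InjOnEdges c')
    (w : Fin T.card → V × V) (hw : IsAuction R T c w)
    (u : Fin T.card → V × V) (hu : ∀ k, IsSecondBest c w k (u k))
    -- `c` and `c'` differ only in the cost of the single edge `e = {x,y}`
    (x y : V) (hxy : x ≠ y)
    (hsame : ∀ p q : V, (p, q) ≠ (x, y) → (p, q) ≠ (y, x) → c' p q = c p q)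
    (hcases :
      -- (1) `e` does not appear in `W` and `c'(e) > max_{k ∈ B_e} c(w_k)`
      ((∀ k : Fin T.card, w k ≠ (x, y) ∧ w k ≠ (y, x)) ∧
        (∀ k : Fin T.card, ((k : ℕ) + 1) ∈ bidRounds (assignFn w) x y →
          c (w k).1 (w k).2 < c' x y)) ∨
      -- (2) `e = w K` appears in `W`, `|B_e| = 1`, and `c(u_K) > c'(e) ≥ 0`
      (∃ K : Fin T.card, (w K = (x, y) ∨ w K = (y, x)) ∧
        (bidRounds (assignFn w) x y).card = 1 ∧
        0 ≤ c' x y ∧ c' x y < c (u K).1 (u K).2) ∨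
      -- (3) `e = w K` appears in `W`, `|B_e| > 1`, and
      -- `c(u_K) > c'(e) > max_{k ∈ B_e ∖ {K}} c(w_k)`
      (∃ K : Fin T.card, (w K = (x, y) ∨ w K = (y, x)) ∧
        1 < (bidRounds (assignFn w) x y).card ∧
        c' x y < c (u K).1 (u K).2 ∧
        (∀ k : Fin T.card, ((k : ℕ) + 1) ∈ bidRounds (assignFn w) x y → k ≠ K →
          c (w k).1 (w k).2 < c' x y))) :
    -- the auction on `c'` outputs the same winning-edge list and assignment function
    -- (hence `Assign`, which depends only on this output, returns the same plan)
    IsAuction R T c' w :=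
  statement8_general R T hdisj c c' hsymm' w hw u hu x y hsame hcases
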